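/- Let 1/2 < δ < 1 and 0 < ρ < 2 - 1/δ. Let k, N : ℕ → ℕ satisfy k(d) < d < N(d), and set δ_d := d/N(d) and ρ_d := k(d)/d, with δ_d → δ and ρ_d → ρ as d → ∞. Define Δ_D(d) := binom(N(d), k(d)) · 2^{-(N(d)-k(d)-1)} · Σ_{i=0}^{N(d)-d-1} binom(N(d)-k(d)-1, i). Then there exist real numbers 0 < a ≤ b and D ∈ ℕ such that for all d ≥ D: a ≤ N(d) · exp(-N(d)·G(δ_d, ρ_d)) · Δ_D(d) ≤ b. -/

import Mathlib

open Filter Finset Real Topology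

/-- The binary entropy function `H(x) = -x log x - (1-x) log(1-x)` (natural logarithm;
note `Real.log 0 = 0`, so the convention `0 · log 0 = 0` is automatic). -/
noncomputable def binEnt (x : ℝ) : ℝ :=
  -x * Real.log x - (1 - x) * Real.log (1 - x)

/-- `G(x,y) = H(x) + x·H(y) - (1 - xy)·log 2`, the Donoho–Tanner exponent. -/
noncomputable def Gfun (x y : ℝ) : ℝ :=
  binEnt x + x * binEnt y - (1 - x * y) * Real.log 2

/-- `Δ_D(d) = C(N,k) · 2^{-(N-k-1)} · Σ_{i=0}^{N-d-1} C(N-k-1, i)`, which equals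
`C(N,k) - E f_k(D_N)` for the Donoho–Tanner random cone `D_N`. -/
noncomputable def DeltaD (k N : ℕ → ℕ) (d : ℕ) : ℝ :=
  ((N d).choose (k d) : ℝ) / 2 ^ (N d - k d - 1) *
    ∑ i ∈ Finset.range (N d - d), ((N d - k d - 1).choose i : ℝ)

open Stirling Nat in
lemma my_stirlingSeq_pos {a : ℕ} (ha : 1 ≤ a) : 0 < stirlingSeq a := by
  obtain ⟨b, rfl⟩ := Nat.exists_eq_add_of_le ha
  simpa [Nat.add_comm] using stirlingSeq'_pos b

open Stirling Nat in
lemma my_factorial_eq {a : ℕ} (ha : 1 ≤ a) :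
    (a ! : ℝ) = stirlingSeq a * (Real.sqrt (2 * a) * ((a : ℝ) / Real.exp 1) ^ a) := by
  have ha' : (0:ℝ) < (a:ℝ) := by exact_mod_cast ha
  have h1 : (0:ℝ) < Real.sqrt (2 * a) := by positivity
  have h2 : (0:ℝ) < ((a : ℝ) / Real.exp 1) ^ a := by positivity
  rw [stirlingSeq]
  field_simp

open Stirling Nat in
lemma my_exp_entropy {K n : ℕ} (h0 : 0 < K) (h1 : K < n) :
    Real.exp ((n : ℝ) * binEnt ((K : ℝ) / (n : ℝ)))
      = (n : ℝ) ^ n / ((K : ℝ) ^ K * ((n - K : ℕ) : ℝ) ^ (n - K)) := by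
  have hK : (0:ℝ) < (K:ℝ) := by exact_mod_cast h0
  have hn : (0:ℝ) < (n:ℝ) := by exact_mod_cast h0.trans h1
  have hnK : (0:ℝ) < ((n - K : ℕ) : ℝ) := by
    have : 0 < n - K := by omega
    exact_mod_cast this
  have hcast : ((n - K : ℕ) : ℝ) = (n:ℝ) - K := by
    push_cast [Nat.cast_sub h1.le]; ring
  rw [← Real.exp_log (show (0:ℝ) < (n : ℝ) ^ n / ((K : ℝ) ^ K * ((n - K : ℕ) : ℝ) ^ (n - K)) by positivity)]
  congr 1
  rw [Real.log_div (by positivity) (by positivity), Real.log_mul (by positivity) (by positivity),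
    Real.log_pow, Real.log_pow, Real.log_pow, binEnt]
  have e1 : (1:ℝ) - (K:ℝ)/(n:ℝ) = ((n - K : ℕ) : ℝ) / (n:ℝ) := by
    rw [hcast]; field_simp
  rw [e1, Real.log_div (by positivity) (by positivity), Real.log_div (by positivity) (by positivity)]
  rw [hcast]
  field_simp
  ring

lemma my_G_split {x y z : ℝ} (h0 : 0 < x) (h1 : x < y) (h2 : y < z) :
    z * Gfun (y / z) (x / y)
      = z * binEnt (x / z) + (z - x) * binEnt ((y - x) / (z - x)) - (z - x) * Real.log 2 := by
  have hy : 0 < y := h0.trans h1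
  have hz : 0 < z := hy.trans h2
  have hyx : 0 < y - x := by linarith
  have hzx : 0 < z - x := by linarith
  have hzy : 0 < z - y := by linarith
  have e1 : (1:ℝ) - y/z = (z-y)/z := by field_simp
  have e2 : (1:ℝ) - x/y = (y-x)/y := by field_simp
  have e3 : (1:ℝ) - x/z = (z-x)/z := by field_simp
  have e4 : (1:ℝ) - (y-x)/(z-x) = (z-y)/(z-x) := by field_simp; ring
  have e5 : (1:ℝ) - y/z * (x/y) = (z-x)/z := by field_simp
  rw [Gfun, binEnt, binEnt, binEnt, binEnt, e1, e2, e3, e4, e5,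
    Real.log_div (by positivity) (by positivity),
    Real.log_div (by positivity) (by positivity),
    Real.log_div (by positivity) (by positivity),
    Real.log_div (by positivity) (by positivity),
    Real.log_div (by positivity) (by positivity),
    Real.log_div (by positivity) (by positivity),
    Real.log_div (by positivity) (by positivity),
    Real.log_div (by positivity) (by positivity)]
  field_simp
  ring

lemma my_tail_le {m : ℕ} {r : ℝ} (hr0 : 0 ≤ r) (hr1 : r < 1) :
    ∀ t : ℕ, (∀ j < t, (j + 1 : ℝ) ≤ r * ((m : ℝ) - j)) →
      (∑ i ∈ Finset.range (t + 1), (m.choose i : ℝ)) ≤ (m.choose t : ℝ) / (1 - r) := by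
  intro t
  induction t with
  | zero =>
    intro _
    norm_num [Finset.sum_range_one]
    rw [show ((1:ℝ)-r)⁻¹ = 1/(1-r) by ring, le_div_iff₀ (by linarith)]
    nlinarith
  | succ t ih =>
    intro h
    have ht : (t + 1 : ℝ) ≤ r * ((m:ℝ) - t) := h t (Nat.lt_succ_self t)
    have hmt : (t:ℝ) < (m:ℝ) := by nlinarith [ht]
    have hmtn : t < m := by exact_mod_cast hmt
    have hkey : (m.choose t : ℝ) ≤ r * (m.choose (t+1) : ℝ) := by
      have hid := Nat.choose_succ_right_eq m t
      have hidR : (m.choose (t+1) : ℝ) * (t+1) = (m.choose t : ℝ) * ((m:ℝ) - t) := by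
        calc (m.choose (t+1) : ℝ) * (t+1) = ((m.choose (t+1) * (t+1) : ℕ) : ℝ) := by push_cast; ring
          _ = ((m.choose t * (m - t) : ℕ) : ℝ) := by rw [hid]
          _ = (m.choose t : ℝ) * ((m:ℝ) - t) := by push_cast [hmtn.le]; ring
      have hpos : (0:ℝ) < (m:ℝ) - t := by linarith
      have hcpos : (0:ℝ) ≤ (m.choose (t+1) : ℝ) := by positivity
      calc (m.choose t : ℝ) = (m.choose (t+1) : ℝ) * (t+1) / ((m:ℝ) - t) := by
              rw [hidR]; field_simp
        _ ≤ (m.choose (t+1) : ℝ) * (r * ((m:ℝ) - t)) / ((m:ℝ) - t) := by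
              gcongr
        _ = r * (m.choose (t+1) : ℝ) := by field_simp
    have hsum : (∑ i ∈ Finset.range (t + 1), (m.choose i : ℝ)) ≤ (m.choose t : ℝ) / (1 - r) :=
      ih fun j hj => h j (hj.trans (Nat.lt_succ_self t))
    rw [Finset.sum_range_succ]
    have h1r : (0:ℝ) < 1 - r := by linarith
    calc (∑ i ∈ Finset.range (t + 1), (m.choose i : ℝ)) + (m.choose (t+1) : ℝ)
        ≤ (m.choose t : ℝ) / (1 - r) + (m.choose (t+1) : ℝ) := by linarith
      _ ≤ r * (m.choose (t+1) : ℝ) / (1 - r) + (m.choose (t+1) : ℝ) := by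
          gcongr
      _ = (m.choose (t+1) : ℝ) / (1 - r) := by field_simp; ring

open Stirling Nat in
lemma my_choose_eq {n K : ℕ} (hK : 1 ≤ K) (hn : K < n) :
    (n.choose K : ℝ) = stirlingSeq n / (stirlingSeq K * stirlingSeq (n - K))
      * (Real.sqrt (2 * n) / (Real.sqrt (2 * K) * Real.sqrt (2 * ((n - K : ℕ) : ℝ))))
      * ((n : ℝ) ^ n / ((K : ℝ) ^ K * ((n - K : ℕ) : ℝ) ^ (n - K))) := by
  have h1n : 1 ≤ n := hK.trans hn.le
  have h1nK : 1 ≤ n - K := by omega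
  have key : (n.choose K : ℝ) * (K ! : ℝ) * ((n - K)! : ℝ) = (n ! : ℝ) := by
    exact_mod_cast congrArg (Nat.cast (R := ℝ)) (Nat.choose_mul_factorial_mul_factorial hn.le)
  rw [my_factorial_eq hK, my_factorial_eq h1nK, my_factorial_eq h1n] at key
  rw [div_pow, div_pow, div_pow] at key
  have hepow : (Real.exp 1)^K * (Real.exp 1)^(n-K) = (Real.exp 1)^n := by
    rw [← pow_add]; congr 1; omega
  have hKpos : (0:ℝ) < (K:ℝ) := by exact_mod_cast hK
  have hnpos : (0:ℝ) < (n:ℝ) := by exact_mod_cast h1n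
  have hnKpos : (0:ℝ) < ((n - K : ℕ):ℝ) := by exact_mod_cast h1nK
  have sK := my_stirlingSeq_pos hK
  have sn := my_stirlingSeq_pos h1n
  have snK := my_stirlingSeq_pos h1nK
  have rK : (0:ℝ) < Real.sqrt (2*K) := by positivity
  have rn : (0:ℝ) < Real.sqrt (2*n) := by positivity
  have rnK : (0:ℝ) < Real.sqrt (2*((n - K : ℕ):ℝ)) := by positivity
  have e1 : (0:ℝ) < Real.exp 1 := Real.exp_pos 1
  rw [Real.sqrt_mul (by norm_num : (0:ℝ) ≤ 2), Real.sqrt_mul (by norm_num : (0:ℝ) ≤ 2),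
    Real.sqrt_mul (by norm_num : (0:ℝ) ≤ 2)]
  field_simp at key
  have hexpn : Real.exp ((n:ℕ):ℝ) = Real.exp ((K:ℕ):ℝ) * Real.exp ((n-K:ℕ):ℝ) := by
    rw [← Real.exp_add]; congr 1; push_cast [hn.le]; ring
  rw [hepow] at key
  have key2 := mul_right_cancel₀
    (show Real.exp 1 ^ n ≠ 0 by positivity) (key.trans (by ring : _ = (stirlingSeq n * Real.sqrt (2 * (n:ℝ)) * (n:ℝ) ^ n) * Real.exp 1 ^ n))
  rw [Real.sqrt_mul (by norm_num : (0:ℝ) ≤ 2), Real.sqrt_mul (by norm_num : (0:ℝ) ≤ 2),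
    Real.sqrt_mul (by norm_num : (0:ℝ) ≤ 2)] at key2
  field_simp
  apply mul_left_cancel₀ (show Real.sqrt 2 ≠ 0 by positivity)
  linear_combination key2

open Stirling in
noncomputable def Qfun (κ dd n : ℕ) : ℝ :=
  (stirlingSeq n / (stirlingSeq κ * stirlingSeq (n - κ)))
  * (stirlingSeq (n - κ - 1) / (stirlingSeq (n - dd - 1) * stirlingSeq (dd - κ)))
  * (2 * (n:ℝ) * (Real.sqrt (2 * (n:ℝ)) * Real.sqrt (2 * ((n - κ - 1 : ℕ):ℝ)))
      / (Real.sqrt (2 * (κ:ℝ)) * Real.sqrt (2 * ((n - κ : ℕ):ℝ)) * Real.sqrt (2 * ((n - dd - 1 : ℕ):ℝ))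
          * Real.sqrt (2 * ((dd - κ : ℕ):ℝ))))
  * (((1 + 1/((n - dd - 1 : ℕ):ℝ))^(n - dd - 1) / (1 + 1/((n - κ - 1 : ℕ):ℝ))^(n - κ - 1))
      * ((((n - dd - 1 : ℕ):ℝ) + 1) / (((n - κ - 1 : ℕ):ℝ) + 1)))

noncomputable def Rfun (κ dd n : ℕ) : ℝ :=
  (∑ i ∈ Finset.range (n - dd), ((n - κ - 1).choose i : ℝ)) / ((n - κ - 1).choose (n - dd - 1) : ℝ)

set_option maxHeartbeats 1600000 in
open Stirling in
lemma F_eq_QR {κ dd n : ℕ} (hκ : 1 ≤ κ) (h1 : κ < dd) (h2 : dd + 2 ≤ n) :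
    (n:ℝ) * Real.exp (-(n:ℝ) * Gfun ((dd:ℝ)/(n:ℝ)) ((κ:ℝ)/(dd:ℝ))) *
      ((n.choose κ : ℝ) / 2 ^ (n - κ - 1) * ∑ i ∈ Finset.range (n - dd), ((n - κ - 1).choose i : ℝ))
    = Qfun κ dd n * Rfun κ dd n := by
  have hκdd : κ < dd := h1
  have hκn : κ < n := by omega
  set m : ℕ := n - κ - 1 with hm
  set tt : ℕ := n - dd - 1 with htt
  have h1tt : 1 ≤ tt := by omega
  have httm : tt < m := by omega
  have h1m : 1 ≤ m := by omega
  have h1dk : 1 ≤ dd - κ := by omega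
  have hκR : (0:ℝ) < (κ:ℝ) := by exact_mod_cast hκ
  have hddR : (0:ℝ) < (dd:ℝ) := by exact_mod_cast (show 0 < dd by omega)
  have hκddR : (κ:ℝ) < (dd:ℝ) := by exact_mod_cast h1
  have hddnR : (dd:ℝ) < (n:ℝ) := by exact_mod_cast (by omega : dd < n)
  -- split the exponential
  have hcnk : ((n - κ : ℕ):ℝ) = (n:ℝ) - κ := by push_cast [hκn.le]; ring
  have hcdk : ((dd - κ : ℕ):ℝ) = (dd:ℝ) - κ := by push_cast [h1.le]; ring
  have hsplit : -(n:ℝ) * Gfun ((dd:ℝ)/(n:ℝ)) ((κ:ℝ)/(dd:ℝ))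
      = ((n - κ : ℕ):ℝ) * Real.log 2
        - ((n:ℝ) * binEnt ((κ:ℝ)/(n:ℝ))
            + ((n - κ : ℕ):ℝ) * binEnt (((dd - κ : ℕ):ℝ)/((n - κ : ℕ):ℝ))) := by
    rw [hcnk, hcdk]
    linear_combination -(my_G_split hκR hκddR hddnR)
  rw [hsplit, Real.exp_sub, Real.exp_add]
  have h2pow : Real.exp (((n - κ : ℕ):ℝ) * Real.log 2) = (2:ℝ)^(n - κ) := by
    rw [← Real.log_pow, Real.exp_log (by positivity)]
  rw [h2pow, my_exp_entropy (by omega : 0 < κ) hκn,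
    my_exp_entropy (by omega : 0 < dd - κ) (by omega : dd - κ < n - κ)]
  rw [my_choose_eq hκ hκn]
  -- sum handling
  have hCpos : (0:ℝ) < (m.choose tt : ℝ) := by
    exact_mod_cast Nat.choose_pos httm.le
  have hsum : (∑ i ∈ Finset.range (n - dd), (m.choose i : ℝ))
      = Rfun κ dd n * (m.choose tt : ℝ) := by
    rw [Rfun]
    rw [div_mul_cancel₀ _ hCpos.ne']
  rw [hsum, my_choose_eq h1tt httm]
  rw [Qfun]
  rw [← hm, ← htt]
  -- nat-sub normalizations
  rw [show n - κ - (dd - κ) = tt + 1 by omega]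
  rw [show m - tt = dd - κ by omega]
  have h2p : (2:ℝ)^(n - κ) = 2 * 2^m := by
    rw [show n - κ = m + 1 by omega, pow_succ]; ring
  rw [h2p]
  -- positivity of all atoms
  have hnR : (0:ℝ) < (n:ℝ) := by exact_mod_cast (show 0 < n by omega)
  have hmR : (0:ℝ) < (m:ℝ) := by exact_mod_cast h1m
  have httR : (0:ℝ) < (tt:ℝ) := by exact_mod_cast h1tt
  have hdkR : (0:ℝ) < ((dd - κ : ℕ):ℝ) := by exact_mod_cast h1dk
  have hm1R : (0:ℝ) < ((m + 1 : ℕ):ℝ) := by positivity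
  have htt1R : (0:ℝ) < ((tt + 1 : ℕ):ℝ) := by positivity
  have sκ := my_stirlingSeq_pos hκ
  have sn := my_stirlingSeq_pos (show 1 ≤ n by omega)
  have sm := my_stirlingSeq_pos h1m
  have snκ := my_stirlingSeq_pos (show 1 ≤ n - κ by omega)
  have stt := my_stirlingSeq_pos h1tt
  have sdk := my_stirlingSeq_pos h1dk
  have r1 : (0:ℝ) < Real.sqrt (2*(κ:ℝ)) := by positivity
  have r2 : (0:ℝ) < Real.sqrt (2*(n:ℝ)) := by positivity
  have h0nκ : (0:ℝ) < ((n - κ:ℕ):ℝ) := by exact_mod_cast (show 0 < n - κ by omega)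
  have r3 : (0:ℝ) < Real.sqrt (2*((n - κ:ℕ):ℝ)) := Real.sqrt_pos.mpr (by linarith)
  have r4 : (0:ℝ) < Real.sqrt (2*(m:ℝ)) := by positivity
  have r5 : (0:ℝ) < Real.sqrt (2*(tt:ℝ)) := by positivity
  have r6 : (0:ℝ) < Real.sqrt (2*((dd - κ:ℕ):ℝ)) := by positivity
  have hpownκ : ((n - κ:ℕ):ℝ)^(n-κ) = ((m:ℝ)+1)^(m+1) := by
    rw [show n - κ = m + 1 by omega]; push_cast; ring
  rw [hpownκ]
  push_cast
  rw [one_add_div hmR.ne', one_add_div httR.ne', div_pow, div_pow]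
  field_simp
  ring

lemma block3_eq_sqrt {x y p q s u : ℝ} (hx : 0 < x) (hy : 0 < y) (hp : 0 < p)
    (hq : 0 < q) (hs : 0 < s) (hu : 0 < u) :
    2 * x * (Real.sqrt (2*x) * Real.sqrt (2*y))
      / (Real.sqrt (2*p) * Real.sqrt (2*q) * Real.sqrt (2*s) * Real.sqrt (2*u))
    = Real.sqrt (x^3 * y / (p*q*s*u)) := by
  have h1 : (0:ℝ) < Real.sqrt (2*p) := by positivity
  have h2 : (0:ℝ) < Real.sqrt (2*q) := by positivity
  have h3 : (0:ℝ) < Real.sqrt (2*s) := by positivity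
  have h4 : (0:ℝ) < Real.sqrt (2*u) := by positivity
  have hb : (0:ℝ) ≤ 2 * x * (Real.sqrt (2*x) * Real.sqrt (2*y))
      / (Real.sqrt (2*p) * Real.sqrt (2*q) * Real.sqrt (2*s) * Real.sqrt (2*u)) := by positivity
  rw [← Real.sqrt_sq hb]
  congr 1
  simp only [div_pow, mul_pow]
  rw [Real.sq_sqrt (by linarith : (0:ℝ) ≤ 2*x), Real.sq_sqrt (by linarith : (0:ℝ) ≤ 2*y),
    Real.sq_sqrt (by linarith : (0:ℝ) ≤ 2*p), Real.sq_sqrt (by linarith : (0:ℝ) ≤ 2*q),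
    Real.sq_sqrt (by linarith : (0:ℝ) ≤ 2*s), Real.sq_sqrt (by linarith : (0:ℝ) ≤ 2*u)]
  field_simp

set_option maxHeartbeats 1000000 in
open Stirling in
theorem donoho_tanner_difference (δ ρ : ℝ) (hδ : 1 / 2 < δ) (hδ1 : δ < 1)
    (hρ0 : 0 < ρ) (hρ : ρ < 2 - 1 / δ)
    (k N : ℕ → ℕ) (hkN : ∀ᶠ d in atTop, k d < d ∧ d < N d)
    (h1 : Tendsto (fun d : ℕ => (d : ℝ) / (N d : ℝ)) atTop (𝓝 δ))
    (h2 : Tendsto (fun d : ℕ => (k d : ℝ) / (d : ℝ)) atTop (𝓝 ρ)) :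
    ∃ a b : ℝ, 0 < a ∧ a ≤ b ∧ ∃ D : ℕ, ∀ d ≥ D,
      a ≤ (N d : ℝ) * Real.exp (-(N d : ℝ) * Gfun ((d : ℝ) / (N d : ℝ)) ((k d : ℝ) / (d : ℝ))) *
          DeltaD k N d ∧
      (N d : ℝ) * Real.exp (-(N d : ℝ) * Gfun ((d : ℝ) / (N d : ℝ)) ((k d : ℝ) / (d : ℝ))) *
          DeltaD k N d ≤ b := by
  have hδ0 : (0:ℝ) < δ := by linarith
  have hδinv : 1 < 1/δ := by rw [lt_div_iff₀ hδ0]; nlinarith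
  have hρ1 : ρ < 1 := by linarith
  set γ : ℝ := ρ * δ with hγdef
  have hγ0 : 0 < γ := mul_pos hρ0 hδ0
  have hγ2δ : γ < 2*δ - 1 := by
    have hmul := mul_lt_mul_of_pos_right hρ hδ0
    have hkey : (1/δ)*δ = 1 := by field_simp
    nlinarith [hmul, hkey]
  have hγδ : γ < δ := by nlinarith
  have hγ1 : γ < 1 := by linarith
  have h1δ : (0:ℝ) < 1 - δ := by linarith
  have hδγ : (0:ℝ) < δ - γ := by linarith
  have h1γ : (0:ℝ) < 1 - γ := by linarith
  have hgap : 1 - δ < δ - γ := by linarith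
  set r : ℝ := ((1-δ)/(δ-γ) + 1)/2 with hrdef
  have hcrit : (1-δ)/(δ-γ) < 1 := by rw [div_lt_one hδγ]; linarith
  have hcrit0 : 0 < (1-δ)/(δ-γ) := by positivity
  have hr0 : 0 < r := by rw [hrdef]; linarith
  have hr1 : r < 1 := by rw [hrdef]; linarith
  have h1r : 0 < 1 - r := by linarith
  have hrgap : 1 - δ < r * (δ - γ) := by
    have : r * (δ-γ) = ((1-δ) + (δ-γ))/2 := by rw [hrdef]; field_simp
    rw [this]; linarith
  -- sequences to atTop
  have hN : Tendsto N atTop atTop :=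
    tendsto_atTop_mono' atTop (hkN.mono fun d h => h.2.le) tendsto_id
  have hcR : Tendsto (fun d => (N d:ℝ)) atTop atTop := tendsto_natCast_atTop_atTop.comp hN
  have hdR : Tendsto (fun d:ℕ => (d:ℝ)) atTop atTop := tendsto_natCast_atTop_atTop
  have hcinv : Tendsto (fun d => ((N d:ℝ))⁻¹) atTop (𝓝 0) := tendsto_inv_atTop_zero.comp hcR
  have hevN1 : ∀ᶠ d in atTop, (0:ℝ) < (N d:ℝ) := hcR.eventually_gt_atTop 0
  have hevd1 : ∀ᶠ d:ℕ in atTop, (0:ℝ) < (d:ℝ) := hdR.eventually_gt_atTop 0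
  -- ratio limits
  have hkc : Tendsto (fun d => (k d:ℝ)/(N d:ℝ)) atTop (𝓝 γ) := by
    apply (h2.mul h1).congr'
    filter_upwards [hevd1] with d hd
    field_simp
  have hnkc : Tendsto (fun d => ((N d - k d:ℕ):ℝ)/(N d:ℝ)) atTop (𝓝 (1-γ)) := by
    apply ((tendsto_const_nhds (x := (1:ℝ))).sub hkc).congr'
    filter_upwards [hkN, hevN1] with d hd hN0
    have hc : ((N d - k d:ℕ):ℝ) = (N d:ℝ) - k d := by
      have : k d ≤ N d := by omega
      push_cast [this]; ring
    rw [hc]; field_simp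
  have hmc : Tendsto (fun d => ((N d - k d - 1:ℕ):ℝ)/(N d:ℝ)) atTop (𝓝 (1-γ)) := by
    have h := ((tendsto_const_nhds (x := (1:ℝ))).sub hkc).sub hcinv
    rw [sub_zero] at h
    apply h.congr'
    filter_upwards [hkN, hevN1] with d hd hN0
    have hc : ((N d - k d - 1:ℕ):ℝ) = (N d:ℝ) - k d - 1 := by
      have : k d + 1 ≤ N d := by omega
      push_cast [Nat.sub_sub, this]; ring
    rw [hc]; field_simp
  have htc : Tendsto (fun d => ((N d - d - 1:ℕ):ℝ)/(N d:ℝ)) atTop (𝓝 (1-δ)) := by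
    have h := ((tendsto_const_nhds (x := (1:ℝ))).sub h1).sub hcinv
    rw [sub_zero] at h
    apply h.congr'
    filter_upwards [hkN, hevN1] with d hd hN0
    have hc : ((N d - d - 1:ℕ):ℝ) = (N d:ℝ) - d - 1 := by
      have : d + 1 ≤ N d := by omega
      push_cast [Nat.sub_sub, this]; ring
    rw [hc]; field_simp
  have hndc : Tendsto (fun d => ((N d - d:ℕ):ℝ)/(N d:ℝ)) atTop (𝓝 (1-δ)) := by
    apply ((tendsto_const_nhds (x := (1:ℝ))).sub h1).congr'
    filter_upwards [hkN, hevN1] with d hd hN0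
    have hc : ((N d - d:ℕ):ℝ) = (N d:ℝ) - d := by
      have : d ≤ N d := by omega
      push_cast [this]; ring
    rw [hc]; field_simp
  have hdkc : Tendsto (fun d => ((d - k d:ℕ):ℝ)/(N d:ℝ)) atTop (𝓝 (δ-γ)) := by
    apply (h1.sub hkc).congr'
    filter_upwards [hkN, hevN1] with d hd hN0
    have hc : ((d - k d:ℕ):ℝ) = (d:ℝ) - k d := by
      have : k d ≤ d := by omega
      push_cast [this]; ring
    rw [hc]; field_simp
  -- nat sequences to atTop
  have h_at : ∀ (X : ℕ → ℕ) (lam : ℝ), 0 < lam →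
      Tendsto (fun d => ((X d:ℕ):ℝ)/(N d:ℝ)) atTop (𝓝 lam) → Tendsto X atTop atTop := by
    intro X lam hlam hX
    rw [← tendsto_natCast_atTop_iff (R := ℝ)]
    apply (Filter.Tendsto.pos_mul_atTop hlam hX hcR).congr'
    filter_upwards [hevN1] with d hd
    field_simp
  have hkat : Tendsto k atTop atTop := h_at _ _ hγ0 hkc
  have hnkat : Tendsto (fun d => N d - k d) atTop atTop := h_at _ _ h1γ hnkc
  have hmat : Tendsto (fun d => N d - k d - 1) atTop atTop := h_at _ _ h1γ hmc
  have htat : Tendsto (fun d => N d - d - 1) atTop atTop := h_at _ _ h1δ htc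
  have hndat : Tendsto (fun d => N d - d) atTop atTop := h_at _ _ h1δ hndc
  have hdkat : Tendsto (fun d => d - k d) atTop atTop := h_at _ _ hδγ hdkc
  -- stirling limits
  have hsπ := Stirling.tendsto_stirlingSeq_sqrt_pi
  have hπ0 : (0:ℝ) < Real.sqrt π := Real.sqrt_pos.mpr Real.pi_pos
  have hSB1 : Tendsto (fun d => stirlingSeq (N d) / (stirlingSeq (k d) * stirlingSeq (N d - k d)))
      atTop (𝓝 (Real.sqrt π / (Real.sqrt π * Real.sqrt π))) :=
    (hsπ.comp hN).div ((hsπ.comp hkat).mul (hsπ.comp hnkat)) (by positivity)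
  have hSB2 : Tendsto (fun d => stirlingSeq (N d - k d - 1)
        / (stirlingSeq (N d - d - 1) * stirlingSeq (d - k d)))
      atTop (𝓝 (Real.sqrt π / (Real.sqrt π * Real.sqrt π))) :=
    (hsπ.comp hmat).div ((hsπ.comp htat).mul (hsπ.comp hdkat)) (by positivity)
  -- W limit and B3
  set Wlim : ℝ := (1-γ)/(γ*(1-γ)*(1-δ)*(δ-γ)) with hWdef
  have hWpos : 0 < Wlim := by rw [hWdef]; positivity
  have hW : Tendsto (fun d => (N d:ℝ)^3 * ((N d - k d - 1:ℕ):ℝ)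
      / ((k d:ℝ) * ((N d - k d:ℕ):ℝ) * ((N d - d - 1:ℕ):ℝ) * ((d - k d:ℕ):ℝ)))
      atTop (𝓝 Wlim) := by
    have h := hmc.div (((hkc.mul hnkc).mul htc).mul hdkc) (by positivity)
    apply h.congr'
    filter_upwards [hevN1, hkat.eventually_gt_atTop 0, hnkat.eventually_gt_atTop 0,
      htat.eventually_gt_atTop 0, hdkat.eventually_gt_atTop 0] with d hN0 hk0 hnk0 ht0 hdk0
    have c1 : (0:ℝ) < (k d:ℝ) := by exact_mod_cast hk0
    have c2 : (0:ℝ) < ((N d - k d:ℕ):ℝ) := by exact_mod_cast hnk0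
    have c3 : (0:ℝ) < ((N d - d - 1:ℕ):ℝ) := by exact_mod_cast ht0
    have c4 : (0:ℝ) < ((d - k d:ℕ):ℝ) := by exact_mod_cast hdk0
    simp only [Pi.div_apply]
    field_simp
  have hB3 : Tendsto (fun d => 2 * (N d:ℝ)
      * (Real.sqrt (2 * (N d:ℝ)) * Real.sqrt (2 * ((N d - k d - 1:ℕ):ℝ)))
      / (Real.sqrt (2 * (k d:ℝ)) * Real.sqrt (2 * ((N d - k d:ℕ):ℝ))
          * Real.sqrt (2 * ((N d - d - 1:ℕ):ℝ)) * Real.sqrt (2 * ((d - k d:ℕ):ℝ))))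
      atTop (𝓝 (Real.sqrt Wlim)) := by
    apply ((Real.continuous_sqrt.tendsto _).comp hW).congr'
    filter_upwards [hevN1, hkat.eventually_gt_atTop 0, hnkat.eventually_gt_atTop 0,
      htat.eventually_gt_atTop 0, hdkat.eventually_gt_atTop 0,
      hmat.eventually_gt_atTop 0] with d hN0 hk0 hnk0 ht0 hdk0 hm0
    have c1 : (0:ℝ) < (k d:ℝ) := by exact_mod_cast hk0
    have c2 : (0:ℝ) < ((N d - k d:ℕ):ℝ) := by exact_mod_cast hnk0
    have c3 : (0:ℝ) < ((N d - d - 1:ℕ):ℝ) := by exact_mod_cast ht0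
    have c4 : (0:ℝ) < ((d - k d:ℕ):ℝ) := by exact_mod_cast hdk0
    have c5 : (0:ℝ) < ((N d - k d - 1:ℕ):ℝ) := by exact_mod_cast hm0
    exact (block3_eq_sqrt hN0 c5 c1 c2 c3 c4).symm
  -- B4 limit
  have hexpt : Tendsto (fun d => (1 + 1/((N d - d - 1:ℕ):ℝ))^(N d - d - 1))
      atTop (𝓝 (Real.exp 1)) := by
    have h := (Real.tendsto_one_add_div_pow_exp 1).comp htat
    apply h.congr
    intro d
    simp [one_div]
  have hexpm : Tendsto (fun d => (1 + 1/((N d - k d - 1:ℕ):ℝ))^(N d - k d - 1))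
      atTop (𝓝 (Real.exp 1)) := by
    have h := (Real.tendsto_one_add_div_pow_exp 1).comp hmat
    apply h.congr
    intro d
    simp [one_div]
  have hrat : Tendsto (fun d => (((N d - d - 1:ℕ):ℝ)+1)/(((N d - k d - 1:ℕ):ℝ)+1))
      atTop (𝓝 ((1-δ)/(1-γ))) := by
    have h := hndc.div hnkc (by linarith)
    apply h.congr'
    filter_upwards [hkN, hevN1] with d hd hN0
    have e1 : ((N d - d:ℕ):ℝ) = ((N d - d - 1:ℕ):ℝ)+1 := by
      rw [show N d - d = (N d - d - 1) + 1 by omega]; push_cast; ring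
    have e2 : ((N d - k d:ℕ):ℝ) = ((N d - k d - 1:ℕ):ℝ)+1 := by
      rw [show N d - k d = (N d - k d - 1) + 1 by omega]; push_cast; ring
    have hnk0 : (0:ℝ) < ((N d - k d:ℕ):ℝ) := by
      exact_mod_cast (show 0 < N d - k d by omega)
    simp only [Pi.div_apply]
    rw [e1, e2]
    have hm1 : (0:ℝ) < ((N d - k d - 1:ℕ):ℝ) + 1 := by positivity
    field_simp
  have hB4 : Tendsto (fun d =>
      ((1 + 1/((N d - d - 1:ℕ):ℝ))^(N d - d - 1) / (1 + 1/((N d - k d - 1:ℕ):ℝ))^(N d - k d - 1))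
      * ((((N d - d - 1:ℕ):ℝ)+1)/(((N d - k d - 1:ℕ):ℝ)+1)))
      atTop (𝓝 ((Real.exp 1 / Real.exp 1) * ((1-δ)/(1-γ)))) :=
    (hexpt.div hexpm (Real.exp_ne_zero 1)).mul hrat
  -- Q limit
  set L : ℝ := (Real.sqrt π / (Real.sqrt π * Real.sqrt π)) * (Real.sqrt π / (Real.sqrt π * Real.sqrt π))
      * Real.sqrt Wlim * ((Real.exp 1 / Real.exp 1) * ((1-δ)/(1-γ))) with hLdef
  have hL0 : 0 < L := by
    rw [hLdef]
    have := Real.sqrt_pos.mpr hWpos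
    have := Real.exp_pos 1
    positivity
  have hQ : Tendsto (fun d => Qfun (k d) d (N d)) atTop (𝓝 L) := by
    have h := ((hSB1.mul hSB2).mul hB3).mul hB4
    apply h.congr
    intro d
    rw [Qfun]
  -- geometric condition
  have hgeo : ∀ᶠ d in atTop, ((N d - d - 1:ℕ):ℝ)
      ≤ r * (((N d - k d - 1:ℕ):ℝ) - ((N d - d - 1:ℕ):ℝ)) := by
    have h := ((hmc.sub htc).const_mul r).sub htc
    have hpos : 0 < r * ((1-γ) - (1-δ)) - (1-δ) := by nlinarith [hrgap]
    have h2 := h.eventually (eventually_gt_nhds hpos)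
    filter_upwards [h2, hevN1] with d hd hN0
    have key : (r * (((N d - k d - 1:ℕ):ℝ)/(N d:ℝ) - ((N d - d - 1:ℕ):ℝ)/(N d:ℝ))
        - ((N d - d - 1:ℕ):ℝ)/(N d:ℝ)) * (N d:ℝ)
        = r * (((N d - k d - 1:ℕ):ℝ) - ((N d - d - 1:ℕ):ℝ)) - ((N d - d - 1:ℕ):ℝ) := by
      field_simp
    nlinarith [mul_pos hd hN0, key]
  -- R bounds
  have hRlow : ∀ᶠ d in atTop, 1 ≤ Rfun (k d) d (N d) := by
    filter_upwards [hkN, hndat.eventually_ge_atTop 2] with d hd hnd2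
    obtain ⟨tt, htt⟩ : ∃ tt, N d - d = tt + 1 := ⟨N d - d - 1, by omega⟩
    have htteq : N d - d - 1 = tt := by omega
    rw [Rfun, htteq, htt,
      le_div_iff₀ (by exact_mod_cast Nat.choose_pos (by omega : tt ≤ N d - k d - 1))]
    rw [one_mul, Finset.sum_range_succ]
    have : (0:ℝ) ≤ ∑ i ∈ Finset.range tt, ((N d - k d - 1).choose i : ℝ) := by
      positivity
    linarith
  have hRhigh : ∀ᶠ d in atTop, Rfun (k d) d (N d) ≤ 1/(1-r) := by
    filter_upwards [hkN, hndat.eventually_ge_atTop 2, hgeo] with d hd hnd2 hg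
    obtain ⟨tt, htt⟩ : ∃ tt, N d - d = tt + 1 := ⟨N d - d - 1, by omega⟩
    have htteq : N d - d - 1 = tt := by omega
    rw [htteq] at hg
    have hCpos : (0:ℝ) < ((N d - k d - 1).choose tt : ℝ) := by
      exact_mod_cast Nat.choose_pos (by omega : tt ≤ N d - k d - 1)
    rw [Rfun, htteq, htt, div_le_iff₀ hCpos]
    have harg : ∀ j < tt, (j + 1 : ℝ) ≤ r * (((N d - k d - 1:ℕ):ℝ) - j) := by
      intro j hj
      have hj1 : (j:ℝ) + 1 ≤ ((tt:ℕ):ℝ) := by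
        exact_mod_cast (show (j:ℕ)+1 ≤ tt by omega)
      have hjt : (j:ℝ) ≤ ((tt:ℕ):ℝ) := by linarith
      calc (j:ℝ) + 1 ≤ ((tt:ℕ):ℝ) := hj1
        _ ≤ r * (((N d - k d - 1:ℕ):ℝ) - ((tt:ℕ):ℝ)) := hg
        _ ≤ r * (((N d - k d - 1:ℕ):ℝ) - (j:ℝ)) := by
            apply mul_le_mul_of_nonneg_left _ hr0.le
            linarith
    have htail := my_tail_le hr0.le hr1 tt harg
    calc (∑ i ∈ Finset.range (tt + 1), ((N d - k d - 1).choose i : ℝ))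
        ≤ ((N d - k d - 1).choose tt : ℝ) / (1-r) := htail
      _ = 1/(1-r) * ((N d - k d - 1).choose tt : ℝ) := by ring
  -- Q bounds
  have hQlow : ∀ᶠ d in atTop, L/2 ≤ Qfun (k d) d (N d) :=
    hQ.eventually (eventually_ge_nhds (by linarith))
  have hQhigh : ∀ᶠ d in atTop, Qfun (k d) d (N d) ≤ 2*L :=
    hQ.eventually (eventually_le_nhds (by linarith))
  -- assembling
  refine ⟨L/2, (2*L)/(1-r), by positivity, ?_, ?_⟩
  · rw [div_le_div_iff₀ (by norm_num) h1r]
    nlinarith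
  have hfinal : ∀ᶠ d in atTop,
      L/2 ≤ (N d : ℝ) * Real.exp (-(N d : ℝ) * Gfun ((d : ℝ) / (N d : ℝ)) ((k d : ℝ) / (d : ℝ))) *
          DeltaD k N d ∧
      (N d : ℝ) * Real.exp (-(N d : ℝ) * Gfun ((d : ℝ) / (N d : ℝ)) ((k d : ℝ) / (d : ℝ))) *
          DeltaD k N d ≤ (2*L)/(1-r) := by
    filter_upwards [hkN, hkat.eventually_ge_atTop 1, hndat.eventually_ge_atTop 2,
      hRlow, hRhigh, hQlow, hQhigh] with d hd hk1 hnd2 hrlo hrhi hqlo hqhi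
    have hFeq : (N d : ℝ) * Real.exp (-(N d : ℝ) * Gfun ((d : ℝ) / (N d : ℝ)) ((k d : ℝ) / (d : ℝ))) *
        DeltaD k N d = Qfun (k d) d (N d) * Rfun (k d) d (N d) := by
      rw [DeltaD]
      exact F_eq_QR hk1 hd.1 (by omega)
    have hQpos : 0 < Qfun (k d) d (N d) := by linarith
    have hRpos : (0:ℝ) < Rfun (k d) d (N d) := by linarith
    constructor
    · rw [hFeq]
      calc L/2 ≤ Qfun (k d) d (N d) := hqlo
        _ = Qfun (k d) d (N d) * 1 := by ring
        _ ≤ Qfun (k d) d (N d) * Rfun (k d) d (N d) := by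
            apply mul_le_mul_of_nonneg_left hrlo hQpos.le
    · rw [hFeq]
      calc Qfun (k d) d (N d) * Rfun (k d) d (N d) ≤ (2*L) * (1/(1-r)) := by
            apply mul_le_mul hqhi hrhi hRpos.le (by linarith)
        _ = (2*L)/(1-r) := by ring
  obtain ⟨D, hD⟩ := eventually_atTop.mp hfinal
  exact ⟨D, hD⟩
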